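/- Let m ≥ 2 be an integer, κ ∈ ℝ, T > 0, and R > 0 with √κ·R < π when κ > 0. Define s_κ : ℝ → ℝ by s_κ(r) = (1 − cos(√κ·r))/κ if κ > 0, s_κ(r) = r²/2 if κ = 0, and s_κ(r) = (cosh(√(−κ)·r) − 1)/(−κ) if κ < 0 (so that s_κ' = sn_κ). Let φ : ℝ × ℝ → ℝ be C^∞ on an open set containing {(s_κ(r), t) : r ∈ (0,R), t ∈ (0,T)}, and suppose ∂ₜφ(s_κ(r),t) = sn_κ(r)²·∂ₛ²φ(s_κ(r),t) + m·sn_κ'(r)·∂ₛφ(s_κ(r),t) for all (r,t) ∈ (0,R) × (0,T). Then for all (r,t) ∈ (0,R) × (0,T): ∂ₜ∂ₛ²φ(s_κ(r),t) = sn_κ(r)²·∂ₛ⁴φ(s_κ(r),t) + (m+4)·sn_κ'(r)·∂ₛ³φ(s_κ(r),t) − κ·(2m+2)·∂ₛ²φ(s_κ(r),t). -/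

import Mathlib

open Set Filter Topology ContDiff

/-- The generalized sine function `sn_κ` of the simply connected space form
of constant sectional curvature `κ`. -/
noncomputable def sn (κ : ℝ) : ℝ → ℝ := fun r =>
  if 0 < κ then Real.sin (Real.sqrt κ * r) / Real.sqrt κ
  else if κ = 0 then r
  else Real.sinh (Real.sqrt (-κ) * r) / Real.sqrt (-κ)

/-- The reparametrizing variable `s_κ(r)`, an antiderivative of `sn_κ`. -/
noncomputable def sVar (κ : ℝ) : ℝ → ℝ := fun r =>
  if 0 < κ then (1 - Real.cos (Real.sqrt κ * r)) / κ
  else if κ = 0 then r ^ 2 / 2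
  else (Real.cosh (Real.sqrt (-κ) * r) - 1) / (-κ)

/-- Partial derivative of a function of two real variables in its first argument. -/
noncomputable def dS (φ : ℝ → ℝ → ℝ) : ℝ → ℝ → ℝ := fun s t => deriv (fun x => φ x t) s

/-- Partial derivative of a function of two real variables in its second argument. -/
noncomputable def dT (φ : ℝ → ℝ → ℝ) : ℝ → ℝ → ℝ := fun s t => deriv (fun τ => φ s τ) t

noncomputable def pd (v : ℝ × ℝ) (G : ℝ × ℝ → ℝ) : ℝ × ℝ → ℝ := fun p => fderiv ℝ G p v

lemma pd_contDiffOn {G : ℝ × ℝ → ℝ} {U : Set (ℝ × ℝ)} (hU : IsOpen U)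
    (hG : ContDiffOn ℝ ∞ G U) (v : ℝ × ℝ) :
    ContDiffOn ℝ ∞ (pd v G) U := by
  have h : ContDiffOn ℝ ∞ (fderiv ℝ G) U :=
    hG.fderiv_of_isOpen hU (by norm_num)
  exact (ContinuousLinearMap.apply ℝ ℝ v).contDiff.comp_contDiffOn h

lemma diffAt_of_contDiffOn {G : ℝ × ℝ → ℝ} {U : Set (ℝ × ℝ)} (hU : IsOpen U)
    (hG : ContDiffOn ℝ ∞ G U) {p : ℝ × ℝ} (hp : p ∈ U) : DifferentiableAt ℝ G p :=
  (hG.differentiableOn (by norm_num)).differentiableAt (hU.mem_nhds hp)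

lemma hasDerivAt_slice1 {G : ℝ × ℝ → ℝ} {p : ℝ × ℝ} (h : DifferentiableAt ℝ G p) :
    HasDerivAt (fun x => G (x, p.2)) (pd (1,0) G p) p.1 := by
  have h1 : HasDerivAt (fun x : ℝ => (x, p.2)) ((1:ℝ), (0:ℝ)) p.1 :=
    (hasDerivAt_id p.1).prodMk (hasDerivAt_const p.1 p.2)
  have := h.hasFDerivAt.comp_hasDerivAt p.1 (by simpa using h1)
  exact this

lemma hasDerivAt_slice2 {G : ℝ × ℝ → ℝ} {p : ℝ × ℝ} (h : DifferentiableAt ℝ G p) :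
    HasDerivAt (fun τ => G (p.1, τ)) (pd (0,1) G p) p.2 := by
  have h1 : HasDerivAt (fun τ : ℝ => (p.1, τ)) ((0:ℝ), (1:ℝ)) p.2 :=
    (hasDerivAt_const p.2 p.1).prodMk (hasDerivAt_id p.2)
  have := h.hasFDerivAt.comp_hasDerivAt p.2 (by simpa using h1)
  exact this

lemma pd_comm {G : ℝ × ℝ → ℝ} {U : Set (ℝ × ℝ)} (hU : IsOpen U)
    (hG : ContDiffOn ℝ ∞ G U) {p : ℝ × ℝ} (hp : p ∈ U) (v w : ℝ × ℝ) :
    pd v (pd w G) p = pd w (pd v G) p := by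
  have hf' : ContDiffOn ℝ ∞ (fderiv ℝ G) U :=
    hG.fderiv_of_isOpen hU (by norm_num)
  have hdiff : DifferentiableAt ℝ (fderiv ℝ G) p :=
    (hf'.differentiableOn (by norm_num)).differentiableAt (hU.mem_nhds hp)
  set f'' := fderiv ℝ (fderiv ℝ G) p with hf''
  have hev : ∀ᶠ y in 𝓝 p, HasFDerivAt G (fderiv ℝ G y) y := by
    filter_upwards [hU.mem_nhds hp] with y hy
    exact ((hG.differentiableOn (by norm_num)).differentiableAt (hU.mem_nhds hy)).hasFDerivAt
  have hsym := second_derivative_symmetric_of_eventually hev hdiff.hasFDerivAt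
  have key : ∀ a b : ℝ × ℝ, pd a (pd b G) p = f'' a b := by
    intro a b
    have h1 : HasFDerivAt (fun q => fderiv ℝ G q b)
        ((ContinuousLinearMap.apply ℝ ℝ b).comp f'') p :=
      (ContinuousLinearMap.apply ℝ ℝ b).hasFDerivAt.comp p hdiff.hasFDerivAt
    have h2 : fderiv ℝ (pd b G) p = (ContinuousLinearMap.apply ℝ ℝ b).comp f'' := h1.fderiv
    simp [pd, h2]
  rw [key, key, hsym]

lemma dS_eq_pd {ψ : ℝ → ℝ → ℝ} {G : ℝ × ℝ → ℝ} {U : Set (ℝ × ℝ)} (hU : IsOpen U)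
    (hG : ContDiffOn ℝ ∞ G U) (hψ : ∀ p ∈ U, ψ p.1 p.2 = G p)
    {s t : ℝ} (hp : (s, t) ∈ U) : dS ψ s t = pd (1,0) G (s, t) := by
  have hev : (fun x => ψ x t) =ᶠ[𝓝 s] (fun x => G (x, t)) := by
    have hopen : IsOpen {x : ℝ | (x, t) ∈ U} := hU.preimage (by fun_prop)
    filter_upwards [hopen.mem_nhds (by simpa using hp)] with x hx
    exact hψ (x, t) hx
  have := (hasDerivAt_slice1 (diffAt_of_contDiffOn hU hG hp)).deriv
  rw [dS, hev.deriv_eq, this]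

lemma dT_eq_pd {ψ : ℝ → ℝ → ℝ} {G : ℝ × ℝ → ℝ} {U : Set (ℝ × ℝ)} (hU : IsOpen U)
    (hG : ContDiffOn ℝ ∞ G U) (hψ : ∀ p ∈ U, ψ p.1 p.2 = G p)
    {s t : ℝ} (hp : (s, t) ∈ U) : dT ψ s t = pd (0,1) G (s, t) := by
  have hev : (fun τ => ψ s τ) =ᶠ[𝓝 t] (fun τ => G (s, τ)) := by
    have hopen : IsOpen {τ : ℝ | (s, τ) ∈ U} := hU.preimage (by fun_prop)
    filter_upwards [hopen.mem_nhds (by simpa using hp)] with τ hτ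
    exact hψ (s, τ) hτ
  have := (hasDerivAt_slice2 (diffAt_of_contDiffOn hU hG hp)).deriv
  rw [dT, hev.deriv_eq, this]

lemma hasDerivAt_sVar (κ r : ℝ) : HasDerivAt (sVar κ) (sn κ r) r := by
  unfold sVar sn
  rcases lt_trichotomy 0 κ with hκ | hκ | hκ
  · simp only [if_pos hκ]
    set a := Real.sqrt κ with ha
    have ha2 : a ^ 2 = κ := Real.sq_sqrt hκ.le
    have ha0 : a ≠ 0 := by positivity
    have h1 : HasDerivAt (fun x : ℝ => a * x) a r := by
      simpa using (hasDerivAt_id r).const_mul a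
    have h2 : HasDerivAt (fun x : ℝ => Real.cos (a * x)) (-Real.sin (a * r) * a) r :=
      (Real.hasDerivAt_cos (a * r)).comp r h1
    have h3 := (h2.const_sub 1).div_const κ
    refine h3.congr_deriv (Eq.symm ?_)
    have hκ0 : κ ≠ 0 := by linarith
    field_simp
    linear_combination (-Real.sin (a*r)) * ha2
  · simp only [if_neg (by linarith : ¬ 0 < κ), if_pos hκ.symm]
    simpa using ((hasDerivAt_pow 2 r).div_const 2)
  · have h0 : ¬ 0 < κ := by linarith
    have hκ0 : κ ≠ 0 := by linarith
    simp only [if_neg h0, if_neg hκ0]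
    set a := Real.sqrt (-κ) with ha
    have ha2 : a ^ 2 = -κ := Real.sq_sqrt (by linarith)
    have ha0 : a ≠ 0 := by
      intro h; rw [h] at ha2; simp at ha2; linarith
    have h1 : HasDerivAt (fun x : ℝ => a * x) a r := by
      simpa using (hasDerivAt_id r).const_mul a
    have h2 : HasDerivAt (fun x : ℝ => Real.cosh (a * x)) (Real.sinh (a * r) * a) r :=
      (Real.hasDerivAt_cosh (a * r)).comp r h1
    have h3 := (h2.sub_const 1).div_const (-κ)
    refine h3.congr_deriv (Eq.symm ?_)
    have hmκ : -κ ≠ 0 := by linarith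
    field_simp
    linear_combination (Real.sinh (a*r)) * ha2

lemma hasDerivAt_sn (κ r : ℝ) : HasDerivAt (sn κ) (1 - κ * sVar κ r) r := by
  unfold sVar sn
  rcases lt_trichotomy 0 κ with hκ | hκ | hκ
  · simp only [if_pos hκ]
    set a := Real.sqrt κ with ha
    have ha2 : a ^ 2 = κ := Real.sq_sqrt hκ.le
    have ha0 : a ≠ 0 := by positivity
    have hκ0 : κ ≠ 0 := by linarith
    have h1 : HasDerivAt (fun x : ℝ => a * x) a r := by
      simpa using (hasDerivAt_id r).const_mul a
    have h2 : HasDerivAt (fun x : ℝ => Real.sin (a * x)) (Real.cos (a * r) * a) r :=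
      (Real.hasDerivAt_sin (a * r)).comp r h1
    have h3 := h2.div_const a
    refine h3.congr_deriv (Eq.symm ?_)
    field_simp
    ring
  · simp only [if_neg (by linarith : ¬ 0 < κ), if_pos hκ.symm, ← hκ]
    simp
    exact hasDerivAt_id' r
  · have h0 : ¬ 0 < κ := by linarith
    have hκ0 : κ ≠ 0 := by linarith
    simp only [if_neg h0, if_neg hκ0]
    set a := Real.sqrt (-κ) with ha
    have ha2 : a ^ 2 = -κ := Real.sq_sqrt (by linarith)
    have ha0 : a ≠ 0 := by
      intro h; rw [h] at ha2; simp at ha2; linarith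
    have h1 : HasDerivAt (fun x : ℝ => a * x) a r := by
      simpa using (hasDerivAt_id r).const_mul a
    have h2 : HasDerivAt (fun x : ℝ => Real.sinh (a * x)) (Real.cosh (a * r) * a) r :=
      (Real.hasDerivAt_sinh (a * r)).comp r h1
    have h3 := h2.div_const a
    refine h3.congr_deriv (Eq.symm ?_)
    have hmκ : -κ ≠ 0 := by linarith
    field_simp
    ring

lemma sn_sq (κ r : ℝ) : sn κ r ^ 2 = 2 * sVar κ r - κ * sVar κ r ^ 2 := by
  unfold sVar sn
  rcases lt_trichotomy 0 κ with hκ | hκ | hκ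
  · simp only [if_pos hκ]
    have ha2 : Real.sqrt κ ^ 2 = κ := Real.sq_sqrt hκ.le
    have hκ0 : κ ≠ 0 := by linarith
    have hs := Real.sin_sq_add_cos_sq (Real.sqrt κ * r)
    field_simp
    linear_combination κ * hs - (1 - Real.cos (Real.sqrt κ * r) ^ 2) * ha2
  · subst hκ
    norm_num
    ring
  · have h0 : ¬ 0 < κ := by linarith
    have hκ0 : κ ≠ 0 := by linarith
    simp only [if_neg h0, if_neg hκ0]
    have ha2 : Real.sqrt (-κ) ^ 2 = -κ := Real.sq_sqrt (by linarith)
    have hs := Real.cosh_sq_sub_sinh_sq (Real.sqrt (-κ) * r)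
    have hmκ : -κ ≠ 0 := by linarith
    rw [div_pow, ha2]
    field_simp
    linear_combination hs

lemma sVar_zero (κ : ℝ) : sVar κ 0 = 0 := by
  unfold sVar
  rcases lt_trichotomy 0 κ with hκ | hκ | hκ
  · simp [if_pos hκ]
  · simp [if_neg (by linarith : ¬ 0 < κ), if_pos hκ.symm]
  · simp [if_neg (by linarith : ¬ 0 < κ), if_neg (by linarith : κ ≠ 0)]

lemma sn_pos {κ R : ℝ} (hκR : 0 < κ → Real.sqrt κ * R < Real.pi) {r : ℝ}
    (hr : r ∈ Set.Ioo (0:ℝ) R) : 0 < sn κ r := by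
  unfold sn
  rcases lt_trichotomy 0 κ with hκ | hκ | hκ
  · simp only [if_pos hκ]
    have ha : 0 < Real.sqrt κ := Real.sqrt_pos.2 hκ
    have h1 : 0 < Real.sqrt κ * r := mul_pos ha hr.1
    have h2 : Real.sqrt κ * r < Real.pi :=
      lt_trans (mul_lt_mul_of_pos_left hr.2 ha) (hκR hκ)
    exact div_pos (Real.sin_pos_of_pos_of_lt_pi h1 h2) ha
  · simp only [if_neg (by linarith : ¬ 0 < κ), if_pos hκ.symm]
    exact hr.1
  · have h0 : ¬ 0 < κ := by linarith
    simp only [if_neg h0, if_neg (by linarith : κ ≠ 0)]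
    have ha : 0 < Real.sqrt (-κ) := Real.sqrt_pos.2 (by linarith)
    exact div_pos (Real.sinh_pos_iff.2 (mul_pos ha hr.1)) ha


/-- differentiating the transformed radial heat equation twice in `s`. -/
theorem stmt8 (m : ℕ) (hm : 2 ≤ m) (κ T R : ℝ) (hT : 0 < T) (hR : 0 < R)
    (hκR : 0 < κ → Real.sqrt κ * R < Real.pi)
    (φ : ℝ → ℝ → ℝ) (U : Set (ℝ × ℝ)) (hU : IsOpen U)
    (hmem : ∀ r ∈ Set.Ioo (0:ℝ) R, ∀ t ∈ Set.Ioo (0:ℝ) T, (sVar κ r, t) ∈ U)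
    (hφ : ContDiffOn ℝ (⊤ : ℕ∞) (fun p : ℝ × ℝ => φ p.1 p.2) U)
    (hheat : ∀ r ∈ Set.Ioo (0:ℝ) R, ∀ t ∈ Set.Ioo (0:ℝ) T,
      dT φ (sVar κ r) t
        = (sn κ r) ^ 2 * dS (dS φ) (sVar κ r) t
          + (m : ℝ) * deriv (sn κ) r * dS φ (sVar κ r) t) :
    ∀ r ∈ Set.Ioo (0:ℝ) R, ∀ t ∈ Set.Ioo (0:ℝ) T,
      dT (dS (dS φ)) (sVar κ r) t
        = (sn κ r) ^ 2 * dS (dS (dS (dS φ))) (sVar κ r) t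
          + ((m : ℝ) + 4) * deriv (sn κ) r * dS (dS (dS φ)) (sVar κ r) t
          - κ * (2 * (m : ℝ) + 2) * dS (dS φ) (sVar κ r) t := by
  intro r hr t ht
  -- setup
  set F : ℝ × ℝ → ℝ := fun p => φ p.1 p.2 with hFdef
  have hF : ContDiffOn ℝ ∞ F U := hφ.of_le (by simp)
  set G1 := pd (1,0) F with hG1def
  set G2 := pd (1,0) G1 with hG2def
  set G3 := pd (1,0) G2 with hG3def
  set G4 := pd (1,0) G3 with hG4def
  set W := pd (0,1) F with hWdef
  set W1 := pd (1,0) W with hW1def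
  have hG1s : ContDiffOn ℝ ∞ G1 U := pd_contDiffOn hU hF _
  have hG2s : ContDiffOn ℝ ∞ G2 U := pd_contDiffOn hU hG1s _
  have hG3s : ContDiffOn ℝ ∞ G3 U := pd_contDiffOn hU hG2s _
  have hWs : ContDiffOn ℝ ∞ W U := pd_contDiffOn hU hF _
  have hW1s : ContDiffOn ℝ ∞ W1 U := pd_contDiffOn hU hWs _
  have h0 : ∀ p ∈ U, φ p.1 p.2 = F p := fun p _ => rfl
  have h1 : ∀ p ∈ U, dS φ p.1 p.2 = G1 p := fun p hp => dS_eq_pd hU hF h0 (by simpa using hp)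
  have h2 : ∀ p ∈ U, dS (dS φ) p.1 p.2 = G2 p := fun p hp =>
    dS_eq_pd hU hG1s h1 (by simpa using hp)
  have h3 : ∀ p ∈ U, dS (dS (dS φ)) p.1 p.2 = G3 p := fun p hp =>
    dS_eq_pd hU hG2s h2 (by simpa using hp)
  have h4 : ∀ p ∈ U, dS (dS (dS (dS φ))) p.1 p.2 = G4 p := fun p hp =>
    dS_eq_pd hU hG3s h3 (by simpa using hp)
  -- monotonicity of sVar
  have hsderiv : ∀ x, deriv (sVar κ) x = sn κ x := fun x => (hasDerivAt_sVar κ x).deriv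
  have hcont : ContinuousOn (sVar κ) (Icc 0 R) := fun x _ =>
    ((hasDerivAt_sVar κ x).continuousAt).continuousWithinAt
  have hmono : StrictMonoOn (sVar κ) (Icc 0 R) := by
    apply strictMonoOn_of_deriv_pos (convex_Icc 0 R) hcont
    intro x hx
    rw [interior_Icc] at hx
    rw [hsderiv]
    exact sn_pos hκR hx
  set S := sVar κ R with hSdef
  set s₀ := sVar κ r with hs₀def
  have hs₀mem : s₀ ∈ Ioo (0:ℝ) S := by
    constructor
    · have := hmono (by constructor <;> [rfl; exact hR.le] : (0:ℝ) ∈ Icc 0 R)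
        ⟨hr.1.le, hr.2.le⟩ hr.1
      rwa [sVar_zero] at this
    · exact hmono ⟨hr.1.le, hr.2.le⟩ ⟨hR.le, le_refl R⟩ hr.2
  have hsurj : ∀ s ∈ Ioo (0:ℝ) S, ∃ r' ∈ Ioo (0:ℝ) R, sVar κ r' = s := by
    intro s hs
    have h : s ∈ Ioo (sVar κ 0) (sVar κ R) := by rwa [sVar_zero]
    obtain ⟨r', hr', hre⟩ := intermediate_value_Ioo hR.le hcont h
    exact ⟨r', hr', hre⟩
  have hIU : ∀ s ∈ Ioo (0:ℝ) S, ((s, t) : ℝ × ℝ) ∈ U := by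
    intro s hs
    obtain ⟨r', hr', hre⟩ := hsurj s hs
    rw [← hre]
    exact hmem r' hr' t ht
  -- the heat equation in the s variable
  have hE : ∀ s ∈ Ioo (0:ℝ) S,
      W (s, t) = (2*s - κ*s^2) * G2 (s, t) + (m:ℝ) * (1 - κ*s) * G1 (s, t) := by
    intro s hs
    obtain ⟨r', hr', hre⟩ := hsurj s hs
    have hpU : ((s, t) : ℝ × ℝ) ∈ U := hIU s hs
    have heq := hheat r' hr' t ht
    rw [hre] at heq
    rw [dT_eq_pd hU hF h0 hpU, dS_eq_pd hU hG1s h1 hpU, dS_eq_pd hU hF h0 hpU] at heq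
    rw [(hasDerivAt_sn κ r').deriv, sn_sq, hre] at heq
    show pd (0,1) F (s, t)
      = (2*s - κ*s^2) * pd (1,0) G1 (s, t) + (m:ℝ) * (1 - κ*s) * pd (1,0) F (s, t)
    rw [heq]
  -- first differentiation in s
  have hE1 : ∀ s ∈ Ioo (0:ℝ) S,
      W1 (s, t) = (2 - 2*κ*s) * G2 (s, t) + (2*s - κ*s^2) * G3 (s, t)
        - (m:ℝ) * κ * G1 (s, t) + (m:ℝ) * (1 - κ*s) * G2 (s, t) := by
    intro s hs
    have hpU : ((s, t) : ℝ × ℝ) ∈ U := hIU s hs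
    have hu1 : HasDerivAt (fun x => G1 (x, t)) (G2 (s, t)) s :=
      hasDerivAt_slice1 (diffAt_of_contDiffOn hU hG1s hpU)
    have hu2 : HasDerivAt (fun x => G2 (x, t)) (G3 (s, t)) s :=
      hasDerivAt_slice1 (diffAt_of_contDiffOn hU hG2s hpU)
    have hA : HasDerivAt (fun x : ℝ => 2*x - κ*x^2) (2 - 2*κ*s) s := by
      have := ((hasDerivAt_id s).const_mul 2).sub ((hasDerivAt_pow 2 s).const_mul κ)
      exact this.congr_deriv (by ring)
    have hB : HasDerivAt (fun x : ℝ => (m:ℝ) * (1 - κ*x)) (-((m:ℝ)*κ)) s := by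
      have := (((hasDerivAt_id s).const_mul κ).const_sub 1).const_mul (m:ℝ)
      simpa using this.congr_deriv (by ring)
    have hRHS : HasDerivAt (fun x => (2*x - κ*x^2) * G2 (x, t) + (m:ℝ) * (1 - κ*x) * G1 (x, t))
        ((2 - 2*κ*s) * G2 (s, t) + (2*s - κ*s^2) * G3 (s, t)
          + (-((m:ℝ)*κ) * G1 (s, t) + (m:ℝ) * (1 - κ*s) * G2 (s, t))) s :=
      (hA.mul hu2).add (hB.mul hu1)
    have hevE : (fun x => W (x, t))
        =ᶠ[𝓝 s] (fun x => (2*x - κ*x^2) * G2 (x, t) + (m:ℝ) * (1 - κ*x) * G1 (x, t)) := by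
      filter_upwards [isOpen_Ioo.mem_nhds hs] with x hx
      exact hE x hx
    have hLHS : HasDerivAt (fun x => W (x, t)) (W1 (s, t)) s :=
      hasDerivAt_slice1 (diffAt_of_contDiffOn hU hWs hpU)
    have := (hRHS.congr_of_eventuallyEq hevE).unique hLHS
    rw [← this]
    ring
  -- second differentiation in s, at s₀ only
  have hpU₀ : ((s₀, t) : ℝ × ℝ) ∈ U := hIU s₀ hs₀mem
  have hu1 : HasDerivAt (fun x => G1 (x, t)) (G2 (s₀, t)) s₀ :=
    hasDerivAt_slice1 (diffAt_of_contDiffOn hU hG1s hpU₀)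
  have hu2 : HasDerivAt (fun x => G2 (x, t)) (G3 (s₀, t)) s₀ :=
    hasDerivAt_slice1 (diffAt_of_contDiffOn hU hG2s hpU₀)
  have hu3 : HasDerivAt (fun x => G3 (x, t)) (G4 (s₀, t)) s₀ :=
    hasDerivAt_slice1 (diffAt_of_contDiffOn hU hG3s hpU₀)
  have hA1 : HasDerivAt (fun x : ℝ => 2 - 2*κ*x) (-(2*κ)) s₀ := by
    have := (((hasDerivAt_id s₀).const_mul (2*κ)).const_sub 2)
    simpa using this.congr_deriv (by ring)
  have hA : HasDerivAt (fun x : ℝ => 2*x - κ*x^2) (2 - 2*κ*s₀) s₀ := by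
    have := ((hasDerivAt_id s₀).const_mul 2).sub ((hasDerivAt_pow 2 s₀).const_mul κ)
    exact this.congr_deriv (by ring)
  have hB : HasDerivAt (fun x : ℝ => (m:ℝ) * (1 - κ*x)) (-((m:ℝ)*κ)) s₀ := by
    have := (((hasDerivAt_id s₀).const_mul κ).const_sub 1).const_mul (m:ℝ)
    simpa using this.congr_deriv (by ring)
  have hRHS2 : HasDerivAt (fun x => (2 - 2*κ*x) * G2 (x, t) + (2*x - κ*x^2) * G3 (x, t)
      - (m:ℝ) * κ * G1 (x, t) + (m:ℝ) * (1 - κ*x) * G2 (x, t))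
      ((-(2*κ)) * G2 (s₀, t) + (2 - 2*κ*s₀) * G3 (s₀, t)
        + ((2 - 2*κ*s₀) * G3 (s₀, t) + (2*s₀ - κ*s₀^2) * G4 (s₀, t))
        - (m:ℝ) * κ * G2 (s₀, t)
        + (-((m:ℝ)*κ) * G2 (s₀, t) + (m:ℝ) * (1 - κ*s₀) * G3 (s₀, t))) s₀ :=
    (((hA1.mul hu2).add (hA.mul hu3)).sub (hu1.const_mul ((m:ℝ) * κ))).add (hB.mul hu2)
  have hevE1 : (fun x => W1 (x, t))
      =ᶠ[𝓝 s₀] (fun x => (2 - 2*κ*x) * G2 (x, t) + (2*x - κ*x^2) * G3 (x, t)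
        - (m:ℝ) * κ * G1 (x, t) + (m:ℝ) * (1 - κ*x) * G2 (x, t)) := by
    filter_upwards [isOpen_Ioo.mem_nhds hs₀mem] with x hx
    exact hE1 x hx
  have hLHS2 : HasDerivAt (fun x => W1 (x, t)) (pd (1,0) W1 (s₀, t)) s₀ :=
    hasDerivAt_slice1 (diffAt_of_contDiffOn hU hW1s hpU₀)
  have hkey : pd (1,0) W1 (s₀, t)
      = (2*s₀ - κ*s₀^2) * G4 (s₀, t) + ((m:ℝ) + 4) * (1 - κ*s₀) * G3 (s₀, t)
        - κ * (2*(m:ℝ) + 2) * G2 (s₀, t) := by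
    have := (hRHS2.congr_of_eventuallyEq hevE1).unique hLHS2
    rw [← this]
    ring
  -- symmetry of second derivatives: pd (0,1) G2 = pd (1,0) W1 at (s₀, t)
  have hswap : pd (0,1) G2 (s₀, t) = pd (1,0) W1 (s₀, t) := by
    have step1 : pd (0,1) G2 (s₀, t) = pd (1,0) (pd (0,1) G1) (s₀, t) :=
      pd_comm hU hG1s hpU₀ (0,1) (1,0)
    have step2 : (pd (0,1) G1) =ᶠ[𝓝 ((s₀, t) : ℝ × ℝ)] W1 := by
      filter_upwards [hU.mem_nhds hpU₀] with p hp
      exact pd_comm hU hF hp (0,1) (1,0)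
    have step3 : fderiv ℝ (pd (0,1) G1) (s₀, t) = fderiv ℝ W1 (s₀, t) := step2.fderiv_eq
    rw [step1]
    show fderiv ℝ (pd (0,1) G1) (s₀, t) (1,0) = pd (1,0) W1 (s₀, t)
    rw [step3]
    rfl
  -- assemble
  rw [dT_eq_pd hU hG2s h2 hpU₀]
  rw [show dS (dS (dS (dS φ))) s₀ t = G4 (s₀, t) from h4 _ hpU₀,
    show dS (dS (dS φ)) s₀ t = G3 (s₀, t) from h3 _ hpU₀,
    show dS (dS φ) s₀ t = G2 (s₀, t) from h2 _ hpU₀]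
  rw [(hasDerivAt_sn κ r).deriv, sn_sq, ← hs₀def]
  rw [hswap, hkey]
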